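/- Let 1 ≤ p < ∞ and 1/p + 1/p' = 1. There is a constant 0 < C < ∞, depending only on p, n and the uniform duality constant, such that for every sequence g = (g_Q)_{Q∈𝒟} with g_Q ∈ Y_Q, one has ‖C_Y g‖_{L_{p'}(ℝ^n)} ≤ C sup { ∑_{Q∈𝒟} ⟨f_Q, g_Q⟩ : f = (f_Q)_{Q∈𝒟}, f_Q ∈ X_Q, ‖N_X f‖_{L_p(ℝ^n)} = 1 }. -/

import Mathlib

open MeasureTheory ENNReal

noncomputable section

/-- Index set for dyadic cubes in `ℝⁿ`: scale `j : ℤ` and position `k : ℤⁿ`. -/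
abbrev DIdx (n : ℕ) := ℤ × (Fin n → ℤ)

/-- The open dyadic cube `2⁻ʲ(0,1)ⁿ + 2⁻ʲ k`. -/
def dcube (n : ℕ) (Q : DIdx n) : Set (EuclideanSpace ℝ (Fin n)) :=
  {x | ∀ i, (2:ℝ) ^ (-Q.1) * (Q.2 i : ℝ) < x i ∧ x i < (2:ℝ) ^ (-Q.1) * ((Q.2 i : ℝ) + 1)}

/-- The `L_p` norm (valued in `ℝ≥0∞`) of an `ℝ≥0∞`-valued function. -/
def eLp {α : Type*} [MeasurableSpace α] (p : ℝ≥0∞) (F : α → ℝ≥0∞) (μ : Measure α) : ℝ≥0∞ :=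
  if p = ∞ then essSup F μ else (∫⁻ x, F x ^ p.toReal ∂μ) ^ p.toReal⁻¹

/-- The non-tangential maximal function `N_X f(x) = sup_{Q ∋ x} ‖f_Q‖`. -/
def NX {n : ℕ} {X : DIdx n → Type*} [∀ Q, NormedAddCommGroup (X Q)]
    (f : ∀ Q, X Q) (x : EuclideanSpace ℝ (Fin n)) : ℝ≥0∞ :=
  ⨆ Q, ⨆ (_ : x ∈ dcube n Q), (‖f Q‖₊ : ℝ≥0∞)

/-- The Carleson functional `C_Y g(x) = sup_{Q ∋ x} |Q|⁻¹ ∑_{R ⊆ Q} ‖g_R‖`. -/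
def CY {n : ℕ} {Y : DIdx n → Type*} [∀ Q, NormedAddCommGroup (Y Q)]
    (g : ∀ Q, Y Q) (x : EuclideanSpace ℝ (Fin n)) : ℝ≥0∞ :=
  ⨆ Q, ⨆ (_ : x ∈ dcube n Q),
    (volume (dcube n Q))⁻¹ * ∑' R : {R : DIdx n // dcube n R ⊆ dcube n Q}, (‖g R.1‖₊ : ℝ≥0∞)

/-- A duality between Banach spaces, with constant `C`. -/
def IsDuality {X Y : Type*} [NormedAddCommGroup X] [NormedSpace ℝ X]
    [NormedAddCommGroup Y] [NormedSpace ℝ Y]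
    (pair : X →ₗ[ℝ] Y →ₗ[ℝ] ℝ) (C : ℝ) : Prop :=
  (∀ f g, |pair f g| ≤ C * ‖f‖ * ‖g‖) ∧
  (∀ f, ‖f‖ ≤ C * sSup ((fun g => pair f g) '' {g | ‖g‖ = 1})) ∧
  (∀ g, ‖g‖ ≤ C * sSup ((fun f => pair f g) '' {f | ‖f‖ = 1}))

/-!
Write `q = p'`, `b_R = ‖g_R‖` and `σ = (1 - 2^{1-q})⁻¹`.

Testing with the weight `1_{R ⊆ Q}`, whose non-tangential maximal function is `1_Q`, bounds
`∑_{R ⊆ Q} b_R` by `2 C₀ |Q|^{1/p}` times the supremum; this is the whole proof when `p = 1`, and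
also in dimension `0`, where every dyadic cube is the whole (probability) space.

For `1 < p < ∞` we may assume `b` finitely supported (monotone convergence). The maximal dyadic
cubes with average above `2^k` tile `Ω_k = {C b > 2^k}`, so `2^k |Ω_k| ≤ ∑_{R ⊆ Ω_k} b_R`. Hence
the weight `a_R = ∑_k 2^{k(q-1)} 1[R ⊆ Ω_k]` satisfies `∑_R a_R b_R ≥ D := ∑_k 2^{kq} |Ω_k|`,
while `N a ≤ σ 2^{m(q-1)}` on `Ω_m \ Ω_{m+1}`, so `‖N a‖_p ≤ σ D^{1/p}` because `(q-1)p = q`.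
As `‖C b‖_q ≤ 2 D^{1/q}`, this gives `‖C b‖_q ≤ 2σ sup {∑ a b : ‖N a‖_p ≤ 1}`. Finally a scalar
weight becomes a test function `f_R = a_R u_R`, where `‖u_R‖ ≤ 1` and `‖g_R‖ ≤ 2 C₀ ⟨u_R, g_R⟩`.
-/

open Set

section Cubes

variable {n : ℕ}

lemma dcube_eq_preimage (Q : DIdx n) :
    dcube n Q = (MeasurableEquiv.toLp 2 (Fin n → ℝ)).symm ⁻¹'
      univ.pi fun i => Ioo ((2:ℝ) ^ (-Q.1) * Q.2 i) ((2:ℝ) ^ (-Q.1) * (Q.2 i + 1)) := by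
  ext x
  simp [dcube, MeasurableEquiv.coe_toLp_symm]

lemma measurableSet_dcube (Q : DIdx n) : MeasurableSet (dcube n Q) := by
  rw [dcube_eq_preimage]
  exact MeasurableEquiv.measurable _ (.univ_pi fun _ => measurableSet_Ioo)

lemma volume_dcube (Q : DIdx n) :
    volume (dcube n Q) = ENNReal.ofReal ((2:ℝ) ^ (-Q.1)) ^ n := by
  rw [dcube_eq_preimage,
    (EuclideanSpace.volume_preserving_symm_measurableEquiv_toLp (Fin n)).measure_preimage
      (MeasurableSet.univ_pi fun _ => measurableSet_Ioo).nullMeasurableSet,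
    volume_pi_pi]
  simp [Real.volume_Ioo, mul_add]

lemma volume_dcube_ne_zero (Q : DIdx n) : volume (dcube n Q) ≠ 0 := by
  rw [volume_dcube]
  positivity

lemma volume_dcube_ne_top (Q : DIdx n) : volume (dcube n Q) ≠ ∞ := by
  rw [volume_dcube]
  exact pow_ne_top ofReal_ne_top

lemma dcube_nonempty (Q : DIdx n) : (dcube n Q).Nonempty := by
  refine ⟨WithLp.toLp 2 fun i => (2:ℝ) ^ (-Q.1) * (Q.2 i + 1 / 2), fun i => ?_⟩
  have : (0:ℝ) < (2:ℝ) ^ (-Q.1) := by positivity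
  constructor <;> nlinarith

lemma dyadic_Ioo_subset {j j' k m : ℤ} (hj : j ≤ j') {x : ℝ}
    (hx : x ∈ Ioo ((2:ℝ) ^ (-j) * k) ((2:ℝ) ^ (-j) * (k + 1)))
    (hx' : x ∈ Ioo ((2:ℝ) ^ (-j') * m) ((2:ℝ) ^ (-j') * (m + 1))) :
    Ioo ((2:ℝ) ^ (-j') * m) ((2:ℝ) ^ (-j') * (m + 1)) ⊆
      Ioo ((2:ℝ) ^ (-j) * k) ((2:ℝ) ^ (-j) * (k + 1)) := by
  obtain ⟨d, rfl⟩ : ∃ d : ℕ, j' = j + d := ⟨(j' - j).toNat, by omega⟩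
  set ε : ℝ := (2:ℝ) ^ (-(j + d))
  have hε : 0 < ε := by positivity
  have hscale : (2:ℝ) ^ (-j) = ε * ((2 ^ d : ℤ) : ℝ) := by
    rw [Int.cast_pow, Int.cast_ofNat, ← zpow_natCast, ← zpow_add₀ two_ne_zero]
    ring_nf
  rw [hscale] at hx ⊢
  -- in units of `ε` both intervals have integer endpoints, so overlapping forces nesting
  have hlo : (2 ^ d : ℤ) * k < m + 1 := by
    have : ε * ((2 ^ d : ℤ) * k : ℤ) < ε * (m + 1 : ℤ) := by
      push_cast at *; nlinarith [hx.1, hx'.2]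
    exact_mod_cast (mul_lt_mul_iff_right₀ hε).mp this
  have hhi : m < (2 ^ d : ℤ) * (k + 1) := by
    have : ε * (m : ℤ) < ε * ((2 ^ d : ℤ) * (k + 1) : ℤ) := by
      push_cast at *; nlinarith [hx.2, hx'.1]
    exact_mod_cast (mul_lt_mul_iff_right₀ hε).mp this
  have hlo' : ((2 ^ d : ℤ) : ℝ) * k ≤ m := by exact_mod_cast (by omega : (2 ^ d : ℤ) * k ≤ m)
  have hhi' : (m : ℝ) + 1 ≤ ((2 ^ d : ℤ) : ℝ) * (k + 1) := by
    exact_mod_cast (by omega : m + 1 ≤ (2 ^ d : ℤ) * (k + 1))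
  apply Ioo_subset_Ioo <;> nlinarith

lemma dcube_subset_of_fst_le {Q Q' : DIdx n} (hj : Q.1 ≤ Q'.1)
    (h : (dcube n Q ∩ dcube n Q').Nonempty) : dcube n Q' ⊆ dcube n Q := by
  obtain ⟨x, hx, hx'⟩ := h
  exact fun y hy i => dyadic_Ioo_subset hj (hx i) (hx' i) (hy i)

lemma dcube_subset_or_subset_or_disjoint (Q Q' : DIdx n) :
    dcube n Q ⊆ dcube n Q' ∨ dcube n Q' ⊆ dcube n Q ∨ Disjoint (dcube n Q) (dcube n Q') := by
  by_cases hd : Disjoint (dcube n Q) (dcube n Q')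
  · exact .inr (.inr hd)
  rw [not_disjoint_iff_nonempty_inter] at hd
  rcases le_total Q.1 Q'.1 with h | h
  · exact .inr (.inl (dcube_subset_of_fst_le h hd))
  · exact .inl (dcube_subset_of_fst_le h (inter_comm _ _ ▸ hd))

lemma eq_of_fst_eq_of_dcube_subset {Q Q' : DIdx n} (hj : Q.1 = Q'.1)
    (h : dcube n Q ⊆ dcube n Q') : Q = Q' := by
  obtain ⟨x, hx⟩ := dcube_nonempty Q
  refine Prod.ext hj (funext fun i => ?_)
  have hε : (0:ℝ) < (2:ℝ) ^ (-Q.1) := by positivity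
  obtain ⟨h1, h2⟩ := hx i
  obtain ⟨h3, h4⟩ := h hx i
  rw [← hj] at h3 h4
  have : (Q.2 i : ℝ) < Q'.2 i + 1 := (mul_lt_mul_iff_right₀ hε).mp (h1.trans h4)
  have : (Q'.2 i : ℝ) < Q.2 i + 1 := (mul_lt_mul_iff_right₀ hε).mp (h3.trans h2)
  have : Q.2 i < Q'.2 i + 1 := by exact_mod_cast ‹(Q.2 i : ℝ) < Q'.2 i + 1›
  have : Q'.2 i < Q.2 i + 1 := by exact_mod_cast ‹(Q'.2 i : ℝ) < Q.2 i + 1›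
  omega

lemma fst_le_of_dcube_subset (hn : n ≠ 0) {Q Q' : DIdx n} (h : dcube n Q ⊆ dcube n Q') :
    Q'.1 ≤ Q.1 := by
  by_contra! hlt
  have := measure_mono (μ := volume) h
  rw [volume_dcube, volume_dcube] at this
  refine this.not_gt (ENNReal.pow_lt_pow_left hn ?_)
  rw [ENNReal.ofReal_lt_ofReal_iff (by positivity)]
  exact zpow_lt_zpow_right₀ one_lt_two (by omega)

lemma exists_le_fst_of_volume_le (hn : n ≠ 0) {V : ℝ≥0∞} (hV : V ≠ ∞) :
    ∃ j₀ : ℤ, ∀ Q : DIdx n, volume (dcube n Q) ≤ V → j₀ ≤ Q.1 := by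
  obtain ⟨m, hm⟩ := ENNReal.exists_nat_gt hV
  refine ⟨-m, fun Q hQ => ?_⟩
  by_contra! hlt
  have h2m : (m : ℝ) ≤ (2:ℝ) ^ (-Q.1) :=
    calc (m : ℝ) ≤ 2 ^ m := by exact_mod_cast Nat.lt_two_pow_self.le
      _ = (2:ℝ) ^ (m : ℤ) := (zpow_natCast _ _).symm
      _ ≤ (2:ℝ) ^ (-Q.1) := zpow_le_zpow_right₀ one_le_two (by omega)
  have h1 : (1:ℝ) ≤ (2:ℝ) ^ (-Q.1) := one_le_zpow₀ one_le_two (by omega)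
  have : (m : ℝ≥0∞) ≤ volume (dcube n Q) := by
    rw [volume_dcube, ← ENNReal.ofReal_natCast]
    exact (ENNReal.ofReal_le_ofReal h2m).trans
      (le_self_pow₀ (ENNReal.one_le_ofReal.mpr h1) hn)
  exact (this.trans hQ).not_gt hm

def maximalCubes (𝒬 : Set (DIdx n)) : Set (DIdx n) :=
  {Q | Q ∈ 𝒬 ∧ ∀ Q' ∈ 𝒬, dcube n Q ⊆ dcube n Q' → Q' = Q}

lemma pairwiseDisjoint_maximalCubes (𝒬 : Set (DIdx n)) :
    (maximalCubes 𝒬).PairwiseDisjoint (dcube n) := by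
  intro Q hQ Q' hQ' hne
  rcases dcube_subset_or_subset_or_disjoint Q Q' with h | h | h
  · exact absurd (hQ.2 Q' hQ'.1 h).symm hne
  · exact absurd (hQ'.2 Q hQ.1 h) hne
  · exact h

lemma exists_mem_maximalCubes_superset (hn : n ≠ 0) {𝒬 : Set (DIdx n)} {V : ℝ≥0∞} (hV : V ≠ ∞)
    (h𝒬 : ∀ Q ∈ 𝒬, volume (dcube n Q) ≤ V) {Q₀ : DIdx n} (hQ₀ : Q₀ ∈ 𝒬) :
    ∃ Q ∈ maximalCubes 𝒬, dcube n Q₀ ⊆ dcube n Q := by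
  obtain ⟨j₀, hj₀⟩ := exists_le_fst_of_volume_le hn hV
  let P : ℤ → Prop := fun j => ∃ Q ∈ 𝒬, Q.1 = j ∧ dcube n Q₀ ⊆ dcube n Q
  obtain ⟨j, ⟨Q, hQ, rfl, hQ₀Q⟩, hleast⟩ := Int.exists_least_of_bdd (P := P)
    ⟨j₀, fun _ ⟨Q, hQ, hj, _⟩ => hj ▸ hj₀ Q (h𝒬 Q hQ)⟩ ⟨Q₀.1, Q₀, hQ₀, rfl, subset_rfl⟩
  refine ⟨Q, ⟨hQ, fun Q' hQ' hQQ' => ?_⟩, hQ₀Q⟩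
  have h1 : Q.1 ≤ Q'.1 := hleast _ ⟨Q', hQ', rfl, hQ₀Q.trans hQQ'⟩
  have h2 : Q'.1 ≤ Q.1 := fst_le_of_dcube_subset hn hQQ'
  exact (eq_of_fst_eq_of_dcube_subset (le_antisymm h1 h2) hQQ').symm

end Cubes

section Functionals

variable {n : ℕ}

def cubeAvg (n : ℕ) (b : DIdx n → ℝ≥0∞) (Q : DIdx n) : ℝ≥0∞ :=
  (volume (dcube n Q))⁻¹ * ∑' R : {R : DIdx n // dcube n R ⊆ dcube n Q}, b R.1

def carleson (n : ℕ) (b : DIdx n → ℝ≥0∞) (x : EuclideanSpace ℝ (Fin n)) : ℝ≥0∞ :=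
  ⨆ Q, ⨆ (_ : x ∈ dcube n Q), cubeAvg n b Q

def ntMax (n : ℕ) (a : DIdx n → ℝ≥0∞) (x : EuclideanSpace ℝ (Fin n)) : ℝ≥0∞ :=
  ⨆ Q, ⨆ (_ : x ∈ dcube n Q), a Q

lemma CY_eq_carleson {Y : DIdx n → Type*} [∀ Q, NormedAddCommGroup (Y Q)] (g : ∀ Q, Y Q) :
    CY g = carleson n fun R => ‖g R‖₊ := rfl

lemma lt_carleson_iff {b : DIdx n → ℝ≥0∞} {t : ℝ≥0∞} {x : EuclideanSpace ℝ (Fin n)} :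
    t < carleson n b x ↔ ∃ Q, x ∈ dcube n Q ∧ t < cubeAvg n b Q := by
  simp only [carleson, lt_iSup_iff, exists_prop]

lemma measurable_carleson (b : DIdx n → ℝ≥0∞) : Measurable (carleson n b) := by
  refine Measurable.iSup fun Q => ?_
  have : (fun x => ⨆ (_ : x ∈ dcube n Q), cubeAvg n b Q) =
      (dcube n Q).indicator fun _ => cubeAvg n b Q := by
    ext x
    by_cases hx : x ∈ dcube n Q <;> simp [hx]
  rw [this]
  exact measurable_const.indicator (measurableSet_dcube Q)

lemma carleson_le_tsum_div_volume (b : DIdx n → ℝ≥0∞) (x : EuclideanSpace ℝ (Fin n)) :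
    carleson n b x ≤ ∑' R, b R / volume (dcube n R) := by
  refine iSup₂_le fun Q _ => ?_
  rw [cubeAvg, ← ENNReal.tsum_mul_left]
  calc ∑' R : {R : DIdx n // dcube n R ⊆ dcube n Q}, (volume (dcube n Q))⁻¹ * b R.1
      ≤ ∑' R : {R : DIdx n // dcube n R ⊆ dcube n Q}, b R.1 / volume (dcube n R.1) := by
        refine ENNReal.tsum_le_tsum fun R => ?_
        rw [mul_comm, div_eq_mul_inv]
        gcongr
        exact R.2
    _ ≤ ∑' R, b R / volume (dcube n R) :=
        ENNReal.tsum_comp_le_tsum_of_injective Subtype.val_injective _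

lemma indicator_le_ntMax (a : DIdx n → ℝ≥0∞) (Q : DIdx n) (x : EuclideanSpace ℝ (Fin n)) :
    (dcube n Q).indicator (fun _ => a Q) x ≤ ntMax n a x := by
  by_cases hx : x ∈ dcube n Q
  · rw [indicator_of_mem hx]
    exact le_iSup₂ (f := fun Q (_ : x ∈ dcube n Q) => a Q) Q hx
  · simp [hx]

end Functionals

section LpNorm

variable {α : Type*} [MeasurableSpace α] {μ : Measure α} {p : ℝ≥0∞}

lemma eLp_of_ne_top (hp : p ≠ ∞) (F : α → ℝ≥0∞) :
    eLp p F μ = (∫⁻ x, F x ^ p.toReal ∂μ) ^ p.toReal⁻¹ :=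
  if_neg hp

lemma eLp_mono {F G : α → ℝ≥0∞} (h : ∀ x, F x ≤ G x) : eLp p F μ ≤ eLp p G μ := by
  unfold eLp
  split
  · exact essSup_mono_ae (.of_forall h)
  · gcongr with x
    exact h x

lemma eLp_const_mul (hp : p ≠ 0) (hp' : p ≠ ∞) {c : ℝ≥0∞} (hc : c ≠ ∞) (F : α → ℝ≥0∞) :
    eLp p (fun x => c * F x) μ = c * eLp p F μ := by
  have hpr : 0 < p.toReal := ENNReal.toReal_pos hp hp'
  simp only [eLp_of_ne_top hp', ENNReal.mul_rpow_of_nonneg _ _ hpr.le]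
  rw [lintegral_const_mul' _ _ (by finiteness), ENNReal.mul_rpow_of_nonneg _ _ (by positivity),
    ← ENNReal.rpow_mul, mul_inv_cancel₀ hpr.ne', ENNReal.rpow_one]

lemma eLp_indicator_const (hp : p ≠ 0) (hp' : p ≠ ∞) {s : Set α} (hs : MeasurableSet s)
    (c : ℝ≥0∞) : eLp p (s.indicator fun _ => c) μ = c * μ s ^ p.toReal⁻¹ := by
  have hpr : 0 < p.toReal := ENNReal.toReal_pos hp hp'
  have : (fun x => s.indicator (fun _ => c) x ^ p.toReal) = s.indicator fun _ => c ^ p.toReal := by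
    ext x
    by_cases hx : x ∈ s <;> simp [hx, hpr]
  rw [eLp_of_ne_top hp', this, lintegral_indicator_const hs, ENNReal.mul_rpow_of_nonneg _ _
    (by positivity), ← ENNReal.rpow_mul, mul_inv_cancel₀ hpr.ne', ENNReal.rpow_one]

end LpNorm

section NonTangential

variable {n : ℕ} {p : ℝ≥0∞}

lemma mul_volume_rpow_le_eLp_ntMax (hp : p ≠ 0) (hp' : p ≠ ∞) (a : DIdx n → ℝ≥0∞)
    (Q : DIdx n) : a Q * volume (dcube n Q) ^ p.toReal⁻¹ ≤ eLp p (ntMax n a) volume := by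
  rw [← eLp_indicator_const hp hp' (measurableSet_dcube Q)]
  exact eLp_mono (indicator_le_ntMax a Q)

lemma volume_dcube_rpow_pos (Q : DIdx n) (r : ℝ) : 0 < volume (dcube n Q) ^ r :=
  ENNReal.rpow_pos (pos_iff_ne_zero.mpr (volume_dcube_ne_zero Q)) (volume_dcube_ne_top Q)

lemma ne_top_of_eLp_ntMax_ne_top (hp : p ≠ 0) (hp' : p ≠ ∞) {a : DIdx n → ℝ≥0∞}
    (ha : eLp p (ntMax n a) volume ≠ ∞) (Q : DIdx n) : a Q ≠ ∞ := by
  intro haQ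
  have := mul_volume_rpow_le_eLp_ntMax hp hp' a Q
  rw [haQ, ENNReal.top_mul (volume_dcube_rpow_pos Q _).ne', top_le_iff] at this
  exact ha this

lemma eq_zero_of_eLp_ntMax_eq_zero (hp : p ≠ 0) (hp' : p ≠ ∞) {a : DIdx n → ℝ≥0∞}
    (ha : eLp p (ntMax n a) volume = 0) (Q : DIdx n) : a Q = 0 := by
  have := mul_volume_rpow_le_eLp_ntMax hp hp' a Q
  rw [ha, nonpos_iff_eq_zero, mul_eq_zero] at this
  exact this.resolve_right (volume_dcube_rpow_pos Q _).ne'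

end NonTangential

lemma IsDuality.exists_norm_le_one_le_pair {X Y : Type*} [NormedAddCommGroup X]
    [NormedSpace ℝ X] [NormedAddCommGroup Y] [NormedSpace ℝ Y] {pair : X →ₗ[ℝ] Y →ₗ[ℝ] ℝ}
    {C : ℝ} (h : IsDuality pair C) (hC : 0 < C) (y : Y) :
    ∃ x : X, ‖x‖ ≤ 1 ∧ ‖y‖ ≤ 2 * C * pair x y := by
  rcases eq_or_ne y 0 with rfl | hy
  · exact ⟨0, by simp⟩
  set S := (fun x => pair x y) '' {x | ‖x‖ = 1}
  have hpos : 0 < ‖y‖ / (2 * C) := by positivity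
  have hS : ‖y‖ / (2 * C) < sSup S := by
    have : ‖y‖ / (2 * C) < ‖y‖ / C := by
      apply div_lt_div_of_pos_left (norm_pos_iff.mpr hy) hC; linarith
    exact this.trans_le ((div_le_iff₀' hC).mpr (h.2.2 y))
  have hSne : S.Nonempty := by
    by_contra h'
    rw [not_nonempty_iff_eq_empty.mp h', Real.sSup_empty] at hS
    linarith
  obtain ⟨_, ⟨x, hx, rfl⟩, hxy⟩ := exists_lt_of_lt_csSup hSne hS
  refine ⟨x, hx.le, ?_⟩
  rw [div_lt_iff₀' (by positivity)] at hxy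
  exact hxy.le

section Transfer

variable {n : ℕ} {X Y : DIdx n → Type*} [∀ Q, NormedAddCommGroup (X Q)]
  [∀ Q, NormedSpace ℝ (X Q)] [∀ Q, NormedAddCommGroup (Y Q)] [∀ Q, NormedSpace ℝ (Y Q)]
  (pair : ∀ Q, X Q →ₗ[ℝ] Y Q →ₗ[ℝ] ℝ) {p : ℝ≥0∞} (g : ∀ Q, Y Q)

def pairingSup (p : ℝ≥0∞) : ℝ≥0∞ :=
  ⨆ (f : ∀ Q, X Q) (_ : eLp p (NX f) volume = 1), ENNReal.ofReal (∑' Q, pair Q (f Q) (g Q))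

lemma NX_smul (c : ℝ) (f : ∀ Q, X Q) : NX (fun Q => c • f Q) = fun x => ‖c‖ₑ * NX f x := by
  ext x
  simp only [NX, ENNReal.mul_iSup, nnnorm_smul, ENNReal.coe_mul, enorm_eq_nnnorm]

lemma ofReal_tsum_pair_le (hp : p ≠ 0) (hp' : p ≠ ∞) (f : ∀ Q, X Q)
    (hf : eLp p (NX f) volume ≠ ∞) :
    ENNReal.ofReal (∑' Q, pair Q (f Q) (g Q)) ≤ eLp p (NX f) volume * pairingSup pair g p := by
  set s := eLp p (NX f) volume
  rcases eq_or_ne s 0 with hs | hs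
  · have : ∀ Q, f Q = 0 := fun Q => by
      simpa using eq_zero_of_eLp_ntMax_eq_zero hp hp' hs Q
    simp [this]
  have hunit : eLp p (NX fun Q => (s⁻¹).toReal • f Q) volume = 1 := by
    rw [NX_smul, Real.enorm_toReal (ENNReal.inv_ne_top.mpr hs),
      eLp_const_mul hp hp' (ENNReal.inv_ne_top.mpr hs), ENNReal.inv_mul_cancel hs hf]
  have := le_iSup₂ (f := fun (f : ∀ Q, X Q) (_ : eLp p (NX f) volume = 1) =>
    ENNReal.ofReal (∑' Q, pair Q (f Q) (g Q))) _ hunit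
  simp only [map_smul, LinearMap.smul_apply, smul_eq_mul, tsum_mul_left,
    ENNReal.ofReal_mul ENNReal.toReal_nonneg, ENNReal.ofReal_toReal (ENNReal.inv_ne_top.mpr hs)]
    at this
  exact (ENNReal.inv_mul_le_iff hs hf).mp this

lemma sum_mul_nnnorm_le {C₀ : ℝ} (hC₀ : 0 < C₀) (hdual : ∀ Q, IsDuality (pair Q) C₀)
    (hp : p ≠ 0) (hp' : p ≠ ∞) (a : DIdx n → ℝ≥0∞) (ha : eLp p (ntMax n a) volume ≠ ∞)
    (F : Finset (DIdx n)) :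
    ∑ R ∈ F, a R * ‖g R‖₊ ≤
      ENNReal.ofReal (2 * C₀) * eLp p (ntMax n a) volume * pairingSup pair g p := by
  choose u hu hug using fun Q => (hdual Q).exists_norm_le_one_le_pair hC₀ (g Q)
  have ha' := ne_top_of_eLp_ntMax_ne_top hp hp' ha
  let f : ∀ Q, X Q := fun Q => if Q ∈ F then (a Q).toReal • u Q else 0
  have hfa : ∀ Q, (‖f Q‖₊ : ℝ≥0∞) ≤ a Q := fun Q => by
    by_cases hQ : Q ∈ F
    · simp only [f, if_pos hQ, nnnorm_smul, ENNReal.coe_mul]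
      rw [← enorm_eq_nnnorm, Real.enorm_toReal (ha' Q)]
      exact mul_le_of_le_one_right' (ENNReal.coe_le_one_iff.mpr (hu Q))
    · simp [f, hQ]
  have hNf : eLp p (NX f) volume ≤ eLp p (ntMax n a) volume :=
    eLp_mono fun x => iSup₂_mono fun Q _ => hfa Q
  have hterm : ∀ Q ∈ F, (a Q).toReal * ‖g Q‖ ≤ 2 * C₀ * pair Q (f Q) (g Q) := fun Q hQ => by
    simp only [f, if_pos hQ, map_smul, LinearMap.smul_apply, smul_eq_mul]
    nlinarith [hug Q, ENNReal.toReal_nonneg (a := a Q)]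
  have hsum : ∑' Q, pair Q (f Q) (g Q) = ∑ Q ∈ F, pair Q (f Q) (g Q) :=
    tsum_eq_sum fun Q hQ => by simp [f, hQ]
  calc ∑ R ∈ F, a R * ‖g R‖₊ = ENNReal.ofReal (∑ R ∈ F, (a R).toReal * ‖g R‖) := by
        rw [ENNReal.ofReal_sum_of_nonneg fun R _ => by positivity]
        refine Finset.sum_congr rfl fun R _ => ?_
        rw [ENNReal.ofReal_mul ENNReal.toReal_nonneg, ENNReal.ofReal_toReal (ha' R),
          ofReal_norm, enorm_eq_nnnorm]
    _ ≤ ENNReal.ofReal (2 * C₀ * ∑' Q, pair Q (f Q) (g Q)) := by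
        rw [hsum, Finset.mul_sum]
        exact ENNReal.ofReal_le_ofReal (Finset.sum_le_sum hterm)
    _ ≤ ENNReal.ofReal (2 * C₀) * (eLp p (NX f) volume * pairingSup pair g p) := by
        rw [ENNReal.ofReal_mul (by positivity)]
        gcongr
        exact ofReal_tsum_pair_le pair g hp hp' f (ne_top_of_le_ne_top ha hNf)
    _ ≤ _ := by
        rw [mul_assoc]
        gcongr

lemma tsum_nnnorm_le_of_subset {C₀ : ℝ} (hC₀ : 0 < C₀) (hdual : ∀ Q, IsDuality (pair Q) C₀)
    (hp : p ≠ 0) (hp' : p ≠ ∞) (Q : DIdx n) :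
    ∑' R : {R : DIdx n // dcube n R ⊆ dcube n Q}, (‖g R.1‖₊ : ℝ≥0∞) ≤
      ENNReal.ofReal (2 * C₀) * volume (dcube n Q) ^ p.toReal⁻¹ * pairingSup pair g p := by
  let a : DIdx n → ℝ≥0∞ := {R | dcube n R ⊆ dcube n Q}.indicator 1
  have hNa : eLp p (ntMax n a) volume ≤ volume (dcube n Q) ^ p.toReal⁻¹ := by
    rw [← one_mul (_ ^ _), ← eLp_indicator_const hp hp' (measurableSet_dcube Q)]
    refine eLp_mono fun x => iSup₂_le fun R hx => ?_
    by_cases hR : dcube n R ⊆ dcube n Q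
    · simp [a, hR, hR hx]
    · simp [a, hR]
  rw [ENNReal.tsum_eq_iSup_sum]
  refine iSup_le fun s => ?_
  calc ∑ R ∈ s, (‖g R.1‖₊ : ℝ≥0∞) = ∑ R ∈ s.map (.subtype _), a R * ‖g R‖₊ := by
        rw [Finset.sum_map]
        exact Finset.sum_congr rfl fun R _ => by
          rw [Function.Embedding.subtype_apply, show a R = 1 from indicator_of_mem R.2 _, one_mul]
    _ ≤ ENNReal.ofReal (2 * C₀) * eLp p (ntMax n a) volume * pairingSup pair g p :=
        sum_mul_nnnorm_le pair g hC₀ hdual hp hp' a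
          (ne_top_of_le_ne_top (ENNReal.rpow_ne_top_of_nonneg (by positivity)
            (volume_dcube_ne_top Q)) hNa) _
    _ ≤ _ := by gcongr

end Transfer

section TwoPowers

lemma exists_two_rpow_lt_le {y : ℝ≥0∞} (h0 : y ≠ 0) (hy : y ≠ ∞) :
    ∃ m : ℤ, (2:ℝ≥0∞) ^ (m:ℝ) < y ∧ y ≤ 2 ^ ((m:ℝ) + 1) := by
  obtain ⟨r, rfl⟩ : ∃ r, y = ENNReal.ofReal r := ⟨y.toReal, (ofReal_toReal hy).symm⟩
  have hr : 0 < r := ENNReal.ofReal_pos.mp (pos_iff_ne_zero.mpr h0)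
  have hcast : ∀ z : ℤ, (2:ℝ≥0∞) ^ (z:ℝ) = ENNReal.ofReal ((2:ℝ) ^ z) := fun z => by
    rw [← Real.rpow_intCast, ← ENNReal.ofReal_rpow_of_pos two_pos, ENNReal.ofReal_ofNat]
  refine ⟨Int.clog 2 r - 1, ?_, ?_⟩
  · rw [hcast, ENNReal.ofReal_lt_ofReal_iff hr]
    exact_mod_cast Int.zpow_pred_clog_lt_self one_lt_two hr
  · rw [show ((Int.clog 2 r - 1 : ℤ) : ℝ) + 1 = (Int.clog 2 r : ℤ) by push_cast; ring, hcast]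
    exact ENNReal.ofReal_le_ofReal (by exact_mod_cast Int.self_le_zpow_clog one_lt_two r)

lemma two_rpow_lt_iff_le {y : ℝ≥0∞} {m : ℤ} (hm : (2:ℝ≥0∞) ^ (m:ℝ) < y)
    (hm' : y ≤ 2 ^ ((m:ℝ) + 1)) (k : ℤ) : (2:ℝ≥0∞) ^ (k:ℝ) < y ↔ k ≤ m := by
  refine ⟨fun hk => ?_, fun hk => lt_of_le_of_lt ?_ hm⟩
  · by_contra! hmk
    refine (hk.trans_le hm').not_ge (ENNReal.rpow_le_rpow_of_exponent_le one_le_two ?_)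
    exact_mod_cast hmk
  · exact ENNReal.rpow_le_rpow_of_exponent_le one_le_two (by exact_mod_cast hk)

lemma tsum_ite_le_two_rpow_eq (e : ℝ) (m : ℤ) :
    ∑' k : ℤ, (if k ≤ m then (2:ℝ≥0∞) ^ ((k:ℝ) * e) else 0) =
      2 ^ ((m:ℝ) * e) * (1 - 2 ^ (-e))⁻¹ := by
  have hinj : Function.Injective fun l : ℕ => m - l := fun a b h => by simpa using h
  have hsupp : Function.support (fun k : ℤ => if k ≤ m then (2:ℝ≥0∞) ^ ((k:ℝ) * e) else 0) ⊆
      range fun l : ℕ => m - l := fun k hk => by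
    have : k ≤ m := by by_contra h; simp [h] at hk
    exact ⟨(m - k).toNat, by simp only; omega⟩
  rw [← hinj.tsum_eq hsupp, ← ENNReal.tsum_geometric, ← ENNReal.tsum_mul_left]
  refine tsum_congr fun l => ?_
  rw [if_pos (by omega), ← ENNReal.rpow_natCast, ← ENNReal.rpow_mul,
    ← ENNReal.rpow_add _ _ two_ne_zero ofNat_ne_top]
  push_cast
  ring_nf

lemma rpow_le_two_rpow_mul_tsum {q : ℝ} (hq : 0 < q) {y : ℝ≥0∞} (hy : y ≠ ∞) :
    y ^ q ≤ 2 ^ q *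
      ∑' m : ℤ, if (2:ℝ≥0∞) ^ (m:ℝ) < y then (2:ℝ≥0∞) ^ ((m:ℝ) * q) else 0 := by
  rcases eq_or_ne y 0 with rfl | h0
  · simp [ENNReal.zero_rpow_of_pos hq]
  obtain ⟨m, hm, hm'⟩ := exists_two_rpow_lt_le h0 hy
  have hterm := ENNReal.le_tsum (f := fun m : ℤ =>
    if (2:ℝ≥0∞) ^ (m:ℝ) < y then (2:ℝ≥0∞) ^ ((m:ℝ) * q) else 0) m
  simp only [if_pos hm] at hterm
  calc y ^ q ≤ (2 ^ ((m:ℝ) + 1)) ^ q := by gcongr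
    _ = 2 ^ q * 2 ^ ((m:ℝ) * q) := by
        rw [← ENNReal.rpow_mul, ← ENNReal.rpow_add _ _ two_ne_zero ofNat_ne_top]
        ring_nf
    _ ≤ _ := by gcongr

lemma tsum_ite_two_rpow_rpow_le {e p : ℝ} (hp : 0 < p) {y : ℝ≥0∞} (hy : y ≠ ∞) :
    (∑' k : ℤ, if (2:ℝ≥0∞) ^ (k:ℝ) < y then (2:ℝ≥0∞) ^ ((k:ℝ) * e) else 0) ^ p ≤
      (1 - 2 ^ (-e))⁻¹ ^ p *
        ∑' m : ℤ, if (2:ℝ≥0∞) ^ (m:ℝ) < y then (2:ℝ≥0∞) ^ ((m:ℝ) * (e * p)) else 0 := by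
  rcases eq_or_ne y 0 with rfl | h0
  · simp [ENNReal.zero_rpow_of_pos hp]
  obtain ⟨m, hm, hm'⟩ := exists_two_rpow_lt_le h0 hy
  have hterm := ENNReal.le_tsum (f := fun m : ℤ =>
    if (2:ℝ≥0∞) ^ (m:ℝ) < y then (2:ℝ≥0∞) ^ ((m:ℝ) * (e * p)) else 0) m
  simp only [if_pos hm] at hterm
  have hsum : (∑' k : ℤ, if (2:ℝ≥0∞) ^ (k:ℝ) < y then (2:ℝ≥0∞) ^ ((k:ℝ) * e) else 0) =
      2 ^ ((m:ℝ) * e) * (1 - 2 ^ (-e))⁻¹ := by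
    simp_rw [two_rpow_lt_iff_le hm hm', tsum_ite_le_two_rpow_eq]
  rw [hsum, ENNReal.mul_rpow_of_nonneg _ _ hp.le, ← ENNReal.rpow_mul, mul_comm, mul_assoc]
  gcongr

lemma lintegral_tsum_ite_two_rpow_lt {α : Type*} [MeasurableSpace α] (μ : Measure α)
    {F : α → ℝ≥0∞} (hF : Measurable F) (h : ℤ → ℝ≥0∞) :
    ∫⁻ x, ∑' m : ℤ, (if (2:ℝ≥0∞) ^ (m:ℝ) < F x then h m else 0) ∂μ =
      ∑' m : ℤ, h m * μ {x | (2:ℝ≥0∞) ^ (m:ℝ) < F x} := by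
  have hs : ∀ m : ℤ, MeasurableSet {x | (2:ℝ≥0∞) ^ (m:ℝ) < F x} :=
    fun m => measurableSet_lt measurable_const hF
  have hind : ∀ (m : ℤ) x, (if (2:ℝ≥0∞) ^ (m:ℝ) < F x then h m else 0) =
      {x | (2:ℝ≥0∞) ^ (m:ℝ) < F x}.indicator (fun _ => h m) x := fun m x => by
    simp only [indicator_apply, mem_ofPred_eq]
  simp_rw [hind]
  rw [lintegral_tsum fun m => (measurable_const.indicator (hs m)).aemeasurable]
  exact tsum_congr fun m => lintegral_indicator_const (hs m) (h m)

lemma two_rpow_mul_eq (k q : ℝ) : (2:ℝ≥0∞) ^ (k * q) = 2 ^ (k * (q - 1)) * 2 ^ k := by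
  rw [← ENNReal.rpow_add _ _ two_ne_zero ofNat_ne_top]
  ring_nf

lemma ENNReal.rpow_le_of_le_mul_rpow {a c : ℝ≥0∞} {s t : ℝ} (hs : 0 < s) (ht : 0 < t)
    (hst : s + t = 1) (ha : a ≠ ∞) (h : a ≤ c * a ^ s) : a ^ t ≤ c := by
  rcases eq_or_ne a 0 with rfl | h0
  · simp [ENNReal.zero_rpow_of_pos ht]
  rw [← ENNReal.mul_le_mul_iff_right (ENNReal.rpow_pos (pos_iff_ne_zero.mpr h0) ha).ne'
    (ENNReal.rpow_ne_top_of_nonneg hs.le ha), ← ENNReal.rpow_add _ _ h0 ha, hst,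
    ENNReal.rpow_one, mul_comm]
  exact h

lemma ENNReal.rpow_mul_rpow_inv {r : ℝ} (hr : 0 < r) (c d : ℝ≥0∞) :
    (c ^ r * d) ^ r⁻¹ = c * d ^ r⁻¹ := by
  rw [ENNReal.mul_rpow_of_nonneg _ _ (inv_pos.mpr hr).le, ← ENNReal.rpow_mul,
    mul_inv_cancel₀ hr.ne', ENNReal.rpow_one]

lemma inv_one_sub_two_rpow_neg_ne_top {e : ℝ} (he : 0 < e) : (1 - (2:ℝ≥0∞) ^ (-e))⁻¹ ≠ ∞ := by
  rw [ENNReal.inv_ne_top, ne_eq, tsub_eq_zero_iff_le, not_le]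
  exact ENNReal.rpow_lt_one_of_one_lt_of_neg one_lt_two (neg_neg_of_pos he)

end TwoPowers

section ScalarDuality

variable {n : ℕ} (b : DIdx n → ℝ≥0∞)

def carlesonLevel (n : ℕ) (b : DIdx n → ℝ≥0∞) (k : ℤ) : Set (EuclideanSpace ℝ (Fin n)) :=
  {x | (2:ℝ≥0∞) ^ (k:ℝ) < carleson n b x}

def layerSum (n : ℕ) (b : DIdx n → ℝ≥0∞) (q : ℝ) : ℝ≥0∞ :=
  ∑' k : ℤ, 2 ^ ((k:ℝ) * q) * volume (carlesonLevel n b k)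

open Classical in
def levelWeight (n : ℕ) (b : DIdx n → ℝ≥0∞) (e : ℝ) (R : DIdx n) : ℝ≥0∞ :=
  ∑' k : ℤ, if dcube n R ⊆ carlesonLevel n b k then (2:ℝ≥0∞) ^ ((k:ℝ) * e) else 0

lemma measurableSet_carlesonLevel (k : ℤ) : MeasurableSet (carlesonLevel n b k) :=
  measurableSet_lt measurable_const (measurable_carleson b)

lemma lintegral_carleson_rpow_le {q : ℝ} (hq : 0 < q) (hb : ∀ x, carleson n b x ≠ ∞) :
    ∫⁻ x, carleson n b x ^ q ≤ 2 ^ q * layerSum n b q := by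
  calc ∫⁻ x, carleson n b x ^ q
      ≤ ∫⁻ x, 2 ^ q * ∑' m : ℤ, if (2:ℝ≥0∞) ^ (m:ℝ) < carleson n b x
          then (2:ℝ≥0∞) ^ ((m:ℝ) * q) else 0 :=
        lintegral_mono fun x => rpow_le_two_rpow_mul_tsum hq (hb x)
    _ = 2 ^ q * layerSum n b q := by
        rw [lintegral_const_mul' _ _ (ENNReal.rpow_ne_top_of_nonneg hq.le ofNat_ne_top),
          lintegral_tsum_ite_two_rpow_lt _ (measurable_carleson b)]
        rfl

lemma ntMax_levelWeight_le (e : ℝ) (x : EuclideanSpace ℝ (Fin n)) :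
    ntMax n (levelWeight n b e) x ≤
      ∑' k : ℤ, if (2:ℝ≥0∞) ^ (k:ℝ) < carleson n b x then (2:ℝ≥0∞) ^ ((k:ℝ) * e) else 0 := by
  refine iSup₂_le fun R hx => ENNReal.tsum_le_tsum fun k => ?_
  by_cases hR : dcube n R ⊆ carlesonLevel n b k
  · rw [if_pos hR, if_pos (show (2:ℝ≥0∞) ^ (k:ℝ) < carleson n b x from hR hx)]
  · rw [if_neg hR]
    exact zero_le

lemma lintegral_ntMax_levelWeight_rpow_le {e p : ℝ} (hp : 0 < p)
    (hb : ∀ x, carleson n b x ≠ ∞) :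
    ∫⁻ x, ntMax n (levelWeight n b e) x ^ p ≤
      (1 - 2 ^ (-e))⁻¹ ^ p * layerSum n b (e * p) := by
  calc ∫⁻ x, ntMax n (levelWeight n b e) x ^ p
      ≤ ∫⁻ x, (1 - 2 ^ (-e))⁻¹ ^ p * ∑' m : ℤ, if (2:ℝ≥0∞) ^ (m:ℝ) < carleson n b x
          then (2:ℝ≥0∞) ^ ((m:ℝ) * (e * p)) else 0 :=
        lintegral_mono fun x => (ENNReal.rpow_le_rpow (ntMax_levelWeight_le b e x) hp.le).trans
          (tsum_ite_two_rpow_rpow_le (e := e) hp (hb x))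
    _ = (1 - 2 ^ (-e))⁻¹ ^ p * layerSum n b (e * p) := by
        rw [lintegral_const_mul _ (Measurable.tsum fun m =>
            Measurable.ite (measurableSet_carlesonLevel b m) measurable_const measurable_const),
          lintegral_tsum_ite_two_rpow_lt _ (measurable_carleson b)]
        rfl

lemma mul_volume_le_of_lt_cubeAvg {t : ℝ≥0∞} {Q : DIdx n} (h : t < cubeAvg n b Q) :
    t * volume (dcube n Q) ≤ ∑' R : {R : DIdx n // dcube n R ⊆ dcube n Q}, b R.1 := by
  calc t * volume (dcube n Q) ≤ cubeAvg n b Q * volume (dcube n Q) := by gcongr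
    _ = _ := by
      rw [cubeAvg, mul_comm, ← mul_assoc,
        ENNReal.mul_inv_cancel (volume_dcube_ne_zero Q) (volume_dcube_ne_top Q), one_mul]

lemma carlesonLevel_eq_biUnion_maximalCubes (hn : n ≠ 0) (hB : ∑' R, b R ≠ ∞) (k : ℤ) :
    carlesonLevel n b k =
      ⋃ Q ∈ maximalCubes {Q | (2:ℝ≥0∞) ^ (k:ℝ) < cubeAvg n b Q}, dcube n Q := by
  have h2k : (2:ℝ≥0∞) ^ (k:ℝ) ≠ 0 := (ENNReal.rpow_pos two_pos ofNat_ne_top).ne'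
  have hvol : ∀ Q ∈ {Q | (2:ℝ≥0∞) ^ (k:ℝ) < cubeAvg n b Q},
      volume (dcube n Q) ≤ (∑' R, b R) / 2 ^ (k:ℝ) := fun Q hQ => by
    rw [ENNReal.le_div_iff_mul_le (.inl h2k) (.inl (by finiteness)), mul_comm]
    exact (mul_volume_le_of_lt_cubeAvg b hQ).trans
      (ENNReal.tsum_comp_le_tsum_of_injective Subtype.val_injective b)
  ext x
  simp only [carlesonLevel, mem_ofPred_eq, lt_carleson_iff, mem_iUnion, exists_prop]
  constructor
  · rintro ⟨Q, hx, hQ⟩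
    obtain ⟨Q', hQ', hQQ'⟩ :=
      exists_mem_maximalCubes_superset hn (ENNReal.div_ne_top hB h2k) hvol hQ
    exact ⟨Q', hQ', hQQ' hx⟩
  · rintro ⟨Q, hQ, hx⟩
    exact ⟨Q, hx, hQ.1⟩

open Classical in
lemma two_rpow_mul_volume_carlesonLevel_le (hn : n ≠ 0) (hB : ∑' R, b R ≠ ∞) (k : ℤ) :
    2 ^ (k:ℝ) * volume (carlesonLevel n b k) ≤
      ∑' R, if dcube n R ⊆ carlesonLevel n b k then b R else 0 := by
  set M := maximalCubes {Q | (2:ℝ≥0∞) ^ (k:ℝ) < cubeAvg n b Q}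
  have hunion := carlesonLevel_eq_biUnion_maximalCubes b hn hB k
  have hinj : Function.Injective fun x : Σ Q : M, {R : DIdx n // dcube n R ⊆ dcube n Q} =>
      x.2.1 := by
    rintro ⟨⟨Q, hQ⟩, ⟨R, hRQ⟩⟩ ⟨⟨Q', hQ'⟩, ⟨R', hRQ'⟩⟩ (rfl : R = R')
    obtain ⟨x, hx⟩ := dcube_nonempty R
    obtain rfl : Q = Q' := (pairwiseDisjoint_maximalCubes _).elim hQ hQ'
      (not_disjoint_iff.mpr ⟨x, hRQ hx, hRQ' hx⟩)
    rfl
  calc 2 ^ (k:ℝ) * volume (carlesonLevel n b k)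
      = ∑' Q : M, 2 ^ (k:ℝ) * volume (dcube n Q) := by
        rw [hunion, measure_biUnion (to_countable _) (pairwiseDisjoint_maximalCubes _)
          fun Q _ => measurableSet_dcube Q, ENNReal.tsum_mul_left]
    _ ≤ ∑' Q : M, ∑' R : {R : DIdx n // dcube n R ⊆ dcube n Q}, b R.1 :=
        ENNReal.tsum_le_tsum fun Q => mul_volume_le_of_lt_cubeAvg b Q.2.1
    _ = ∑' x : Σ Q : M, {R : DIdx n // dcube n R ⊆ dcube n Q},
          if dcube n x.2.1 ⊆ carlesonLevel n b k then b x.2.1 else 0 := by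
        rw [ENNReal.tsum_sigma']
        refine tsum_congr fun Q => tsum_congr fun R => (if_pos ?_).symm
        rw [hunion]
        exact R.2.trans (subset_biUnion_of_mem Q.2)
    _ ≤ _ := ENNReal.tsum_comp_le_tsum_of_injective hinj
          fun R => if dcube n R ⊆ carlesonLevel n b k then b R else 0

open Classical in
lemma layerSum_le_tsum_levelWeight_mul (hn : n ≠ 0) (hB : ∑' R, b R ≠ ∞) (q : ℝ) :
    layerSum n b q ≤ ∑' R, levelWeight n b (q - 1) R * b R := by
  calc layerSum n b q
      = ∑' k : ℤ, 2 ^ ((k:ℝ) * (q - 1)) * (2 ^ (k:ℝ) * volume (carlesonLevel n b k)) := by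
        exact tsum_congr fun k => by rw [two_rpow_mul_eq, mul_assoc]
    _ ≤ ∑' k : ℤ, 2 ^ ((k:ℝ) * (q - 1)) *
          ∑' R, if dcube n R ⊆ carlesonLevel n b k then b R else 0 := by
        gcongr with k
        exact two_rpow_mul_volume_carlesonLevel_le b hn hB k
    _ = ∑' R, levelWeight n b (q - 1) R * b R := by
        simp_rw [levelWeight, ← ENNReal.tsum_mul_left, ← ENNReal.tsum_mul_right, mul_ite,
          ite_mul, mul_zero, zero_mul]
        exact ENNReal.tsum_comm

lemma two_rpow_mul_volume_carlesonLevel_le_tsum (hn : n ≠ 0) (hB : ∑' R, b R ≠ ∞) (k : ℤ) :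
    2 ^ (k:ℝ) * volume (carlesonLevel n b k) ≤ ∑' R, b R := by
  classical
  refine (two_rpow_mul_volume_carlesonLevel_le b hn hB k).trans (ENNReal.tsum_le_tsum fun R => ?_)
  split_ifs <;> simp

lemma layerSum_ne_top (hn : n ≠ 0) (hB : ∑' R, b R ≠ ∞)
    (hb : ∑' R, b R / volume (dcube n R) ≠ ∞) {q : ℝ} (hq : 1 < q) : layerSum n b q ≠ ∞ := by
  obtain ⟨K, hK⟩ := ENNReal.exists_nat_gt hb
  have hempty : ∀ k : ℤ, K ≤ k → carlesonLevel n b k = ∅ := fun k hk => by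
    refine eq_empty_of_forall_notMem fun x hx => ?_
    have : (K : ℝ≥0∞) ≤ 2 ^ (k:ℝ) := calc
      (K : ℝ≥0∞) ≤ 2 ^ K := by exact_mod_cast Nat.lt_two_pow_self.le
      _ = 2 ^ ((K : ℤ) : ℝ) := by rw [Int.cast_natCast, ENNReal.rpow_natCast]
      _ ≤ 2 ^ (k:ℝ) := ENNReal.rpow_le_rpow_of_exponent_le one_le_two (by exact_mod_cast hk)
    exact (hx.trans_le (carleson_le_tsum_div_volume b x)).not_ge (hK.le.trans this)
  have hterm : ∀ k : ℤ, 2 ^ ((k:ℝ) * q) * volume (carlesonLevel n b k) ≤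
      (∑' R, b R) * if k ≤ K then (2:ℝ≥0∞) ^ ((k:ℝ) * (q - 1)) else 0 := fun k => by
    split_ifs with hk
    · rw [two_rpow_mul_eq, mul_assoc, mul_comm]
      gcongr
      exact two_rpow_mul_volume_carlesonLevel_le_tsum b hn hB k
    · simp [hempty k (by omega)]
  refine ne_top_of_le_ne_top ?_ (ENNReal.tsum_le_tsum hterm)
  rw [ENNReal.tsum_mul_left, tsum_ite_le_two_rpow_eq]
  exact ENNReal.mul_ne_top hB (ENNReal.mul_ne_top (by finiteness)
    (inv_one_sub_two_rpow_neg_ne_top (by linarith)))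

theorem eLp_carleson_le_of_tsum_mul_le (hn : n ≠ 0) {p q : ℝ≥0∞} [p.HolderConjugate q]
    (hp : p ≠ ∞) (hq : q ≠ ∞) (hB : ∑' R, b R ≠ ∞) (hb : ∑' R, b R / volume (dcube n R) ≠ ∞)
    {K : ℝ≥0∞} (hK : ∀ a, eLp p (ntMax n a) volume ≠ ∞ →
      ∑' R, a R * b R ≤ K * eLp p (ntMax n a) volume) :
    eLp q (carleson n b) volume ≤ 2 * (1 - 2 ^ (-(q.toReal - 1)))⁻¹ * K := by
  have hpq : p.toReal.HolderConjugate q.toReal :=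
    ENNReal.HolderConjugate.toReal_of_ne_top hp hq
  set σ : ℝ≥0∞ := (1 - 2 ^ (-(q.toReal - 1)))⁻¹
  set D := layerSum n b q.toReal
  set a := levelWeight n b (q.toReal - 1)
  have hfin : ∀ x, carleson n b x ≠ ∞ :=
    fun x => ne_top_of_le_ne_top hb (carleson_le_tsum_div_volume b x)
  have hD : D ≠ ∞ := layerSum_ne_top b hn hB hb hpq.symm.lt
  have hσ : σ ≠ ∞ := inv_one_sub_two_rpow_neg_ne_top hpq.symm.sub_one_pos
  have hC : eLp q (carleson n b) volume ≤ 2 * D ^ q.toReal⁻¹ := by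
    rw [eLp_of_ne_top hq, ← ENNReal.rpow_mul_rpow_inv hpq.symm.pos 2]
    gcongr
    exact lintegral_carleson_rpow_le b hpq.symm.pos hfin
  have hN : eLp p (ntMax n a) volume ≤ σ * D ^ p.toReal⁻¹ := by
    rw [eLp_of_ne_top hp, ← ENNReal.rpow_mul_rpow_inv hpq.pos σ]
    gcongr
    simpa only [hpq.symm.sub_one_mul_conj] using
      lintegral_ntMax_levelWeight_rpow_le b (e := q.toReal - 1) hpq.pos hfin
  have hD' : D ^ q.toReal⁻¹ ≤ σ * K := by
    refine ENNReal.rpow_le_of_le_mul_rpow (inv_pos.mpr hpq.pos) (inv_pos.mpr hpq.symm.pos)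
      hpq.inv_add_inv_eq_one hD ?_
    calc D ≤ ∑' R, a R * b R := layerSum_le_tsum_levelWeight_mul b hn hB q.toReal
      _ ≤ K * eLp p (ntMax n a) volume :=
          hK a (ne_top_of_le_ne_top (ENNReal.mul_ne_top hσ
            (ENNReal.rpow_ne_top_of_nonneg (by positivity) hD)) hN)
      _ ≤ K * (σ * D ^ p.toReal⁻¹) := by gcongr
      _ = σ * K * D ^ p.toReal⁻¹ := by ring
  calc eLp q (carleson n b) volume ≤ 2 * D ^ q.toReal⁻¹ := hC
    _ ≤ 2 * (σ * K) := by gcongr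
    _ = 2 * σ * K := (mul_assoc _ _ _).symm

end ScalarDuality

section Approximation

variable {n : ℕ}

lemma carleson_mono {b b' : DIdx n → ℝ≥0∞} (h : b ≤ b') : carleson n b ≤ carleson n b' :=
  fun _ => iSup₂_mono fun Q _ => by
    unfold cubeAvg
    gcongr with R
    exact h R.1

lemma carleson_le_iSup_finset (b : DIdx n → ℝ≥0∞) (x : EuclideanSpace ℝ (Fin n)) :
    carleson n b x ≤ ⨆ F : Finset (DIdx n), carleson n ((F : Set (DIdx n)).indicator b) x := by
  refine iSup₂_le fun Q hx => ?_
  rw [cubeAvg, ENNReal.tsum_eq_iSup_sum, ENNReal.mul_iSup]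
  refine iSup_le fun s => le_iSup_of_le (s.map (.subtype _)) ?_
  refine le_trans ?_ (le_iSup₂_of_le Q hx le_rfl)
  rw [cubeAvg]
  gcongr
  calc ∑ R ∈ s, b R.1
      = ∑ R ∈ s, ((s.map (.subtype _) : Finset (DIdx n)) : Set (DIdx n)).indicator b R.1 :=
        Finset.sum_congr rfl fun R hR =>
          (indicator_of_mem (Finset.mem_map_of_mem (Function.Embedding.subtype _) hR) b).symm
    _ ≤ _ := ENNReal.sum_le_tsum s

lemma eLp_carleson_le_of_forall_finset {q : ℝ≥0∞} (hq : q ≠ 0) (hq' : q ≠ ∞)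
    (b : DIdx n → ℝ≥0∞) {L : ℝ≥0∞}
    (h : ∀ F : Finset (DIdx n), eLp q (carleson n ((F : Set (DIdx n)).indicator b)) volume ≤ L) :
    eLp q (carleson n b) volume ≤ L := by
  have hqr : 0 < q.toReal := ENNReal.toReal_pos hq hq'
  simp only [eLp_of_ne_top hq'] at h ⊢
  have hmono : Monotone fun (F : Finset (DIdx n)) x =>
      carleson n ((F : Set (DIdx n)).indicator b) x ^ q.toReal := fun F F' hFF' x => by
    dsimp only
    gcongr
    exact carleson_mono (indicator_le_indicator_of_subset (by simpa) fun _ => zero_le) x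
  calc (∫⁻ x, carleson n b x ^ q.toReal) ^ q.toReal⁻¹
      ≤ (∫⁻ x, ⨆ F : Finset (DIdx n),
          carleson n ((F : Set (DIdx n)).indicator b) x ^ q.toReal) ^ q.toReal⁻¹ := by
        gcongr with x
        calc carleson n b x ^ q.toReal
            ≤ (⨆ F : Finset (DIdx n),
                carleson n ((F : Set (DIdx n)).indicator b) x) ^ q.toReal := by
              gcongr
              exact carleson_le_iSup_finset b x
          _ = _ := (ENNReal.orderIsoRpow _ hqr).map_iSup _
    _ = ⨆ F : Finset (DIdx n), (∫⁻ x,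
          carleson n ((F : Set (DIdx n)).indicator b) x ^ q.toReal) ^ q.toReal⁻¹ := by
        rw [lintegral_iSup_directed (fun F => ((measurable_carleson _).pow_const _).aemeasurable)
          hmono.directed_le, ← ENNReal.orderIsoRpow_apply _ (inv_pos.mpr hqr), OrderIso.map_iSup]
        rfl
    _ ≤ L := iSup_le h

end Approximation

section Main

variable {n : ℕ} {X Y : DIdx n → Type*} [∀ Q, NormedAddCommGroup (X Q)]
  [∀ Q, NormedSpace ℝ (X Q)] [∀ Q, NormedAddCommGroup (Y Q)] [∀ Q, NormedSpace ℝ (Y Q)]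
  (pair : ∀ Q, X Q →ₗ[ℝ] Y Q →ₗ[ℝ] ℝ) {p : ℝ≥0∞} (g : ∀ Q, Y Q) {C₀ : ℝ}

lemma CY_le_of_forall_volume_rpow_eq (hC₀ : 0 < C₀) (hdual : ∀ Q, IsDuality (pair Q) C₀)
    (hp : p ≠ 0) (hp' : p ≠ ∞)
    (hvol : ∀ Q : DIdx n, volume (dcube n Q) ^ p.toReal⁻¹ = volume (dcube n Q))
    (x : EuclideanSpace ℝ (Fin n)) :
    CY g x ≤ ENNReal.ofReal (2 * C₀) * pairingSup pair g p := by
  refine iSup₂_le fun Q _ => ?_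
  calc (volume (dcube n Q))⁻¹ *
        ∑' R : {R : DIdx n // dcube n R ⊆ dcube n Q}, (‖g R.1‖₊ : ℝ≥0∞)
      ≤ (volume (dcube n Q))⁻¹ * (ENNReal.ofReal (2 * C₀) *
          volume (dcube n Q) ^ p.toReal⁻¹ * pairingSup pair g p) := by
        gcongr
        exact tsum_nnnorm_le_of_subset pair g hC₀ hdual hp hp' Q
    _ = ENNReal.ofReal (2 * C₀) * pairingSup pair g p := by
        rw [hvol, mul_right_comm _ (volume _), mul_comm, mul_assoc,
          ENNReal.mul_inv_cancel (volume_dcube_ne_zero Q) (volume_dcube_ne_top Q), mul_one]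

lemma eLp_top_CY_le (hC₀ : 0 < C₀) (hdual : ∀ Q, IsDuality (pair Q) C₀) :
    eLp ∞ (CY g) volume ≤ ENNReal.ofReal (2 * C₀) * pairingSup pair g 1 := by
  rw [eLp, if_pos rfl]
  exact essSup_le_of_ae_le _ (.of_forall (CY_le_of_forall_volume_rpow_eq pair g hC₀ hdual
    one_ne_zero one_ne_top fun Q => by simp))

lemma eLp_CY_le (hn : n ≠ 0) (hC₀ : 0 < C₀) (hdual : ∀ Q, IsDuality (pair Q) C₀)
    {q : ℝ≥0∞} [p.HolderConjugate q] (hp : p ≠ ∞) (hq : q ≠ ∞) :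
    eLp q (CY g) volume ≤
      2 * (1 - 2 ^ (-(q.toReal - 1)))⁻¹ * (ENNReal.ofReal (2 * C₀) * pairingSup pair g p) := by
  rw [CY_eq_carleson]
  refine eLp_carleson_le_of_forall_finset (ENNReal.HolderConjugate.ne_zero q p) hq _ fun F => ?_
  have hsum : ∀ c : DIdx n → ℝ≥0∞,
      ∑' R, c R * (F : Set (DIdx n)).indicator (fun R => (‖g R‖₊ : ℝ≥0∞)) R =
        ∑ R ∈ F, c R * ‖g R‖₊ := fun c => by
    rw [sum_eq_tsum_indicator]
    exact tsum_congr fun R => (indicator_mul_right _ c _).symm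
  have hfin : ∀ c : DIdx n → ℝ≥0∞, (∀ R, c R ≠ ∞) →
      ∑' R, c R * (F : Set (DIdx n)).indicator (fun R => (‖g R‖₊ : ℝ≥0∞)) R ≠ ∞ :=
    fun c hc => hsum c ▸ ENNReal.sum_ne_top.mpr fun R _ => ENNReal.mul_ne_top (hc R) coe_ne_top
  refine eLp_carleson_le_of_tsum_mul_le _ hn hp hq ?_ ?_ fun a ha => ?_
  · simpa using hfin 1 fun _ => one_ne_top
  · simpa [div_eq_mul_inv, mul_comm] using
      hfin (fun R => (volume (dcube n R))⁻¹)
        fun R => ENNReal.inv_ne_top.mpr (volume_dcube_ne_zero R)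
  · rw [hsum]
    calc ∑ R ∈ F, a R * ‖g R‖₊
        ≤ ENNReal.ofReal (2 * C₀) * eLp p (ntMax n a) volume * pairingSup pair g p :=
          sum_mul_nnnorm_le pair g hC₀ hdual (ENNReal.HolderConjugate.ne_zero p q) hp a ha F
      _ = _ := by ring

lemma eLp_CY_le_of_dim_zero {X Y : DIdx 0 → Type*} [∀ Q, NormedAddCommGroup (X Q)]
    [∀ Q, NormedSpace ℝ (X Q)] [∀ Q, NormedAddCommGroup (Y Q)] [∀ Q, NormedSpace ℝ (Y Q)]
    (pair : ∀ Q, X Q →ₗ[ℝ] Y Q →ₗ[ℝ] ℝ) {p : ℝ≥0∞} (g : ∀ Q, Y Q) {C₀ : ℝ} (hC₀ : 0 < C₀)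
    (hdual : ∀ Q, IsDuality (pair Q) C₀) (hp : p ≠ 0) (hp' : p ≠ ∞) {q : ℝ≥0∞} (hq : q ≠ 0)
    (hq' : q ≠ ∞) : eLp q (CY g) volume ≤ ENNReal.ofReal (2 * C₀) * pairingSup pair g p := by
  have hvol : ∀ Q : DIdx 0, volume (dcube 0 Q) = 1 := fun Q => by simp [volume_dcube]
  have huniv : volume (univ : Set (EuclideanSpace ℝ (Fin 0))) = 1 := by
    rw [← hvol 0]
    congr
    ext x
    simp [dcube]
  calc eLp q (CY g) volume
      ≤ eLp q (univ.indicator fun _ => ENNReal.ofReal (2 * C₀) * pairingSup pair g p) volume :=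
        eLp_mono fun x => by
          rw [indicator_of_mem (mem_univ x)]
          exact CY_le_of_forall_volume_rpow_eq pair g hC₀ hdual hp hp'
            (fun Q => by rw [hvol, one_rpow]) x
    _ = ENNReal.ofReal (2 * C₀) * pairingSup pair g p := by
        rw [eLp_indicator_const hq hq' MeasurableSet.univ, huniv, one_rpow, mul_one]

end Main

/-- Theorem 2.2(iii): `‖C_Y g‖_{p'} ≤ C sup { ∑_Q ⟨f_Q, g_Q⟩ : ‖N_X f‖_p = 1 }`, with `C`
depending only on `p`, `n` and the uniform duality constant `C₀`. -/
theorem stmt2 (n : ℕ) (p p' : ℝ≥0∞) (hp1 : 1 ≤ p) (hptop : p ≠ ∞)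
    (hconj : 1/p + 1/p' = 1) (C₀ : ℝ) (hC₀ : 0 < C₀) :
    ∃ C : ℝ, 0 < C ∧
      ∀ (X Y : DIdx n → Type)
        [∀ Q, NormedAddCommGroup (X Q)] [∀ Q, NormedSpace ℝ (X Q)]
        [∀ Q, CompleteSpace (X Q)]
        [∀ Q, NormedAddCommGroup (Y Q)] [∀ Q, NormedSpace ℝ (Y Q)]
        [∀ Q, CompleteSpace (Y Q)]
        (pair : ∀ Q, X Q →ₗ[ℝ] Y Q →ₗ[ℝ] ℝ),
        (∀ Q, IsDuality (pair Q) C₀) →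
        ∀ g : ∀ Q, Y Q,
          eLp p' (CY g) volume ≤
            ENNReal.ofReal C *
              ⨆ (f : ∀ Q, X Q) (_ : eLp p (NX f) volume = 1),
                ENNReal.ofReal (∑' Q, pair Q (f Q) (g Q)) := by
  have hpq : p.HolderConjugate p' :=
    ENNReal.holderConjugate_iff.mpr (by simpa only [one_div] using hconj)
  set σ : ℝ≥0∞ := (1 - 2 ^ (-(p'.toReal - 1)))⁻¹
  refine ⟨4 * C₀ * max σ.toReal 1, by positivity, fun X Y _ _ _ _ _ _ pair hdual g => ?_⟩
  change eLp p' (CY g) volume ≤ ENNReal.ofReal _ * pairingSup pair g p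
  have h2C₀ : ENNReal.ofReal (2 * C₀) ≤ ENNReal.ofReal (4 * C₀ * max σ.toReal 1) :=
    ENNReal.ofReal_le_ofReal (by nlinarith [le_max_right σ.toReal 1])
  rcases hp1.eq_or_lt with rfl | hp1
  · rw [(ENNReal.HolderConjugate.eq_top_iff_eq_one p' 1).mpr rfl]
    exact (eLp_top_CY_le pair g hC₀ hdual).trans (by gcongr)
  have hp' : p' ≠ ∞ := (ENNReal.HolderConjugate.ne_top_iff_ne_one p' p).mpr hp1.ne'
  rcases eq_or_ne n 0 with rfl | hn
  · exact (eLp_CY_le_of_dim_zero pair g hC₀ hdual hpq.ne_zero hptop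
      (ENNReal.HolderConjugate.ne_zero p' p) hp').trans (by gcongr)
  have hσ : σ ≠ ∞ := inv_one_sub_two_rpow_neg_ne_top
    (ENNReal.HolderConjugate.toReal_of_ne_top hptop hp').symm.sub_one_pos
  calc eLp p' (CY g) volume ≤ 2 * σ * (ENNReal.ofReal (2 * C₀) * pairingSup pair g p) :=
        eLp_CY_le pair g hn hC₀ hdual hptop hp'
    _ = ENNReal.ofReal (4 * C₀ * σ.toReal) * pairingSup pair g p := by
        rw [show 4 * C₀ * σ.toReal = 2 * σ.toReal * (2 * C₀) by ring,
          ENNReal.ofReal_mul (p := 2 * σ.toReal) (by positivity),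
          ENNReal.ofReal_mul (q := σ.toReal) zero_le_two, ENNReal.ofReal_toReal hσ,
          ENNReal.ofReal_ofNat]
        ring
    _ ≤ _ := by gcongr; exact le_max_left _ _
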